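/- arXiv:2011.09960 — 2 statements merged into one kernel-verified Lean document; each statement's English description precedes it below -/
import Mathlib

section
/- For every real θ ∈ [0,1], every real ε > 0, and every integer n ≥ 2, the supremum over ε-DP n-tuples (p_i) of the arithmetic mean over all ordered pairs i ≠ j of J_θ(p_i,p_j) equals the supremum over ε-DP n-tuples of min_{i≠j} J_θ(p_i,p_j); in particular both equal ((f_θ(e^ε,1) + f_θ(1,e^ε))/(n−1)) · max_{1 ≤ k ≤ ⌊n/2⌋} k(n−k)/(k·e^ε + n − k), where f_θ(α,β) = (α−β)²/((1−θ)α + θβ). -/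
/-!
Write `E = e^ε`, `F = f_θ(E,1) + f_θ(1,E)` and `S(v) = ∑_{i,j} f_θ(v_i, v_j)`. Summing over
coordinates, `∑_{i≠j} J_θ(p_i,p_j) = ∑_k S(p_·(k))`, and each coordinate vector `v = p_·(k)`
satisfies `v_i ≤ E v_j`. Rescaled by its minimum it lies in the box `[1,E]^n`, on which `S` is
convex (`f_θ` is a perspective of `x ↦ x²`), so `S(v) - c ∑ v` is maximal at a vertex. At a
vertex with `k` entries `E` one has `S = k(n-k) F` and `∑ v = kE + n - k`, whence
`S(v) ≤ F · maxK n ε · ∑ v` and `avg_{i≠j} J_θ ≤ F · maxK n ε / (n-1)`; the minimum is below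
the average. Conversely, spreading an optimal vertex over all `n!` permutations of its entries,
one coordinate per permutation, gives an `ε`-DP tuple in which every pair has exactly this
value of `J_θ`, so both suprema are attained.
-/

open scoped BigOperators Classical ComplexOrder
open Matrix

noncomputable section

/-- `p` is a probability vector in `ℝ^d`. -/
def IsProbVec {d : ℕ} (p : Fin d → ℝ) : Prop :=
  (∀ k, 0 ≤ p k) ∧ ∑ k, p k = 1

/-- `(p i)_{i=1}^n` is an `ε`-differentially private `n`-tuple of probability vectors. -/
def IsDP {n d : ℕ} (ε : ℝ) (p : Fin n → Fin d → ℝ) : Prop :=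
  (∀ i, IsProbVec (p i)) ∧ ∀ i j k, p i k ≤ Real.exp ε * p j k

/-- Classical RLD Fisher information `J_θ(p,q)`. -/
def Jc {d : ℕ} (θ : ℝ) (p q : Fin d → ℝ) : ℝ :=
  ∑ k, (q k - p k) ^ 2 / ((1 - θ) * p k + θ * q k)

/-- `ρ` is a density matrix on `ℂ^d`. -/
def IsDensityMatrix {d : ℕ} (ρ : Matrix (Fin d) (Fin d) ℂ) : Prop :=
  ρ.PosSemidef ∧ ρ.trace = 1

/-- `(ρ i)_{i=1}^n` is a classical-quantum `ε`-differentially private `n`-tuple. -/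
def IsCQDP {n d : ℕ} (ε : ℝ) (ρ : Fin n → Matrix (Fin d) (Fin d) ℂ) : Prop :=
  (∀ i, IsDensityMatrix (ρ i)) ∧ ∀ i j, (Real.exp ε • ρ j - ρ i).PosSemidef

/-- `(ρ i)_{i=1}^n` lies in the essentially classical set `EC_n(ε)`. -/
def InEC {n d : ℕ} (ε : ℝ) (ρ : Fin n → Matrix (Fin d) (Fin d) ℂ) : Prop :=
  ∃ (m : ℕ) (p : Fin n → Fin m → ℝ) (σ : Fin m → Matrix (Fin d) (Fin d) ℂ),
    IsDP ε p ∧ (∀ k, IsDensityMatrix (σ k)) ∧ ∀ i, ρ i = ∑ k, (p i k : ℂ) • σ k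

/-- Quantum RLD Fisher information `J_θ(ρ,σ) = Tr((σ−ρ)²((1−θ)ρ+θσ)⁻¹)`. -/
def Jq {d : ℕ} (θ : ℝ) (ρ σ : Matrix (Fin d) (Fin d) ℂ) : ℝ :=
  (((σ - ρ) ^ 2 * ((1 - θ : ℂ) • ρ + (θ : ℂ) • σ)⁻¹).trace).re

/-- The function `f_θ(α,β) = (α−β)²/((1−θ)α+θβ)`. -/
def fTheta (θ α β : ℝ) : ℝ := (α - β) ^ 2 / ((1 - θ) * α + θ * β)

/-- `min_{i≠j} J_θ(p_i,p_j)` (classical). -/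
def minPairsC {n d : ℕ} (θ : ℝ) (p : Fin n → Fin d → ℝ) : ℝ :=
  ⨅ ij : {q : Fin n × Fin n // q.1 ≠ q.2}, Jc θ (p ij.val.1) (p ij.val.2)

/-- `min_{i≠j} J_θ(ρ_i,ρ_j)` (quantum). -/
def minPairsQ {n d : ℕ} (θ : ℝ) (ρ : Fin n → Matrix (Fin d) (Fin d) ℂ) : ℝ :=
  ⨅ ij : {q : Fin n × Fin n // q.1 ≠ q.2}, Jq θ (ρ ij.val.1) (ρ ij.val.2)

/-- `avg_{i≠j} J_θ(p_i,p_j)` (classical): arithmetic mean over ordered pairs `i ≠ j`. -/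
def avgPairsC {n d : ℕ} (θ : ℝ) (p : Fin n → Fin d → ℝ) : ℝ :=
  (∑ i, ∑ j, if i ≠ j then Jc θ (p i) (p j) else 0) / ((n : ℝ) * ((n : ℝ) - 1))

/-- `avg_{i≠j} J_θ(ρ_i,ρ_j)` (quantum): arithmetic mean over ordered pairs `i ≠ j`. -/
def avgPairsQ {n d : ℕ} (θ : ℝ) (ρ : Fin n → Matrix (Fin d) (Fin d) ℂ) : ℝ :=
  (∑ i, ∑ j, if i ≠ j then Jq θ (ρ i) (ρ j) else 0) / ((n : ℝ) * ((n : ℝ) - 1))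

/-- `M_n^C(ε;J_θ)`: supremum of `min_{i≠j} J_θ(p_i,p_j)` over `ε`-DP `n`-tuples with
positive entries, over all dimensions `d`. -/
def MC (n : ℕ) (ε θ : ℝ) : ℝ :=
  sSup {x : ℝ | ∃ (d : ℕ) (p : Fin n → Fin d → ℝ),
    IsDP ε p ∧ (∀ i k, 0 < p i k) ∧ x = minPairsC θ p}

/-- `M_n^EC(ε;J_θ)`: supremum of `min_{i≠j} J_θ(ρ_i,ρ_j)` over full-rank `n`-tuples in
`EC_n(ε)`, over all dimensions `d`. -/
def MEC (n : ℕ) (ε θ : ℝ) : ℝ :=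
  sSup {x : ℝ | ∃ (d : ℕ) (ρ : Fin n → Matrix (Fin d) (Fin d) ℂ),
    InEC ε ρ ∧ (∀ i, (ρ i).PosDef) ∧ x = minPairsQ θ ρ}

/-- `M_n^CQ(ε;J_θ)`: supremum of `min_{i≠j} J_θ(ρ_i,ρ_j)` over full-rank CQ `ε`-DP
`n`-tuples, over all dimensions `d`. -/
def MCQ (n : ℕ) (ε θ : ℝ) : ℝ :=
  sSup {x : ℝ | ∃ (d : ℕ) (ρ : Fin n → Matrix (Fin d) (Fin d) ℂ),
    IsCQDP ε ρ ∧ (∀ i, (ρ i).PosDef) ∧ x = minPairsQ θ ρ}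

/-- `M_2^C(ε;J_θ)` as the supremum of `J_θ(p,q)` over `ε`-DP pairs with positive entries. -/
def M2C (ε θ : ℝ) : ℝ :=
  sSup {x : ℝ | ∃ (d : ℕ) (p q : Fin d → ℝ),
    IsProbVec p ∧ IsProbVec q ∧ (∀ k, 0 < p k) ∧ (∀ k, 0 < q k) ∧
    (∀ k, p k ≤ Real.exp ε * q k ∧ q k ≤ Real.exp ε * p k) ∧
    x = Jc θ p q}

/-- `max_{1 ≤ k ≤ n/2} k(n−k)/(k e^ε + n − k)`. -/
def maxK (n : ℕ) (ε : ℝ) : ℝ :=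
  sSup {x : ℝ | ∃ k : ℕ, 1 ≤ k ∧ 2 * k ≤ n ∧
    x = ((k : ℝ) * ((n : ℝ) - (k : ℝ))) / ((k : ℝ) * Real.exp ε + (n : ℝ) - (k : ℝ))}


/-- The supremum of `avg_{i≠j} J_θ(p_i,p_j)` over `ε`-DP `n`-tuples with positive entries. -/
def MCavg (n : ℕ) (ε θ : ℝ) : ℝ :=
  sSup {x : ℝ | ∃ (d : ℕ) (p : Fin n → Fin d → ℝ),
    IsDP ε p ∧ (∀ i k, 0 < p i k) ∧ x = avgPairsC θ p}

lemma fTheta_self (θ a : ℝ) : fTheta θ a a = 0 := by simp [fTheta]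

lemma convexComb_pos {θ a b : ℝ} (hθ : θ ∈ Set.Icc (0 : ℝ) 1) (ha : 0 < a) (hb : 0 < b) :
    0 < (1 - θ) * a + θ * b := by
  nlinarith [mul_le_mul_of_nonneg_left (min_le_left a b) (sub_nonneg.2 hθ.2),
    mul_le_mul_of_nonneg_left (min_le_right a b) hθ.1, lt_min ha hb]

lemma fTheta_nonneg {θ a b : ℝ} (hθ : θ ∈ Set.Icc (0 : ℝ) 1) (ha : 0 < a) (hb : 0 < b) :
    0 ≤ fTheta θ a b :=
  div_nonneg (sq_nonneg _) (convexComb_pos hθ ha hb).le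

lemma fTheta_mul_mul (θ c a b : ℝ) : fTheta θ (c * a) (c * b) = c * fTheta θ a b := by
  rcases eq_or_ne c 0 with rfl | hc
  · simp [fTheta]
  · unfold fTheta
    rw [show (c * a - c * b) ^ 2 = c * (c * (a - b) ^ 2) by ring,
      show (1 - θ) * (c * a) + θ * (c * b) = c * ((1 - θ) * a + θ * b) by ring,
      mul_div_mul_left _ _ hc, mul_div_assoc]

lemma Jc_eq_sum_fTheta {d : ℕ} (θ : ℝ) (p q : Fin d → ℝ) :
    Jc θ p q = ∑ k, fTheta θ (p k) (q k) := by
  simp only [Jc, fTheta, sub_sq_comm (q _)]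

lemma Jc_self {d : ℕ} (θ : ℝ) (p : Fin d → ℝ) : Jc θ p p = 0 := by
  simp [Jc_eq_sum_fTheta, fTheta_self]

/-- Joint convexity of `(x, y) ↦ x ^ 2 / y` on `ℝ × (0, ∞)`. -/
lemma convexComb_sq_div_le {x y U V a b : ℝ} (hU : 0 < U) (hV : 0 < V) (ha : 0 ≤ a)
    (hb : 0 ≤ b) (hab : a + b = 1) :
    (a * x + b * y) ^ 2 / (a * U + b * V) ≤ a * (x ^ 2 / U) + b * (y ^ 2 / V) := by
  have hden : 0 < a * U + b * V := by
    rcases ha.eq_or_lt with rfl | ha'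
    · simp_all
    · positivity
  rw [div_le_iff₀ hden, mul_div_assoc', mul_div_assoc', div_add_div _ _ hU.ne' hV.ne',
    div_mul_eq_mul_div, le_div_iff₀ (by positivity)]
  nlinarith [mul_nonneg (mul_nonneg ha hb) (sq_nonneg (x * V - y * U))]

lemma fTheta_convexComb_le {θ x y x' y' a b : ℝ} (hθ : θ ∈ Set.Icc (0 : ℝ) 1)
    (hx : 0 < x) (hy : 0 < y) (hx' : 0 < x') (hy' : 0 < y') (ha : 0 ≤ a) (hb : 0 ≤ b)
    (hab : a + b = 1) :
    fTheta θ (a * x + b * x') (a * y + b * y') ≤ a * fTheta θ x y + b * fTheta θ x' y' := by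
  have key := convexComb_sq_div_le (x := x - y) (y := x' - y')
    (convexComb_pos hθ hx hy) (convexComb_pos hθ hx' hy') ha hb hab
  unfold fTheta
  convert key using 2 <;> ring

/-- The diagonal terms vanish (`fTheta_self`), so this is also the sum over `i ≠ j`. -/
def pairSum {ι : Type*} [Fintype ι] (θ : ℝ) (v : ι → ℝ) : ℝ :=
  ∑ i, ∑ j, fTheta θ (v i) (v j)

section pairSum

variable {ι : Type*} [Fintype ι]

lemma pairSum_smul (θ c : ℝ) (v : ι → ℝ) : pairSum θ (c • v) = c * pairSum θ v := by
  simp only [pairSum, Pi.smul_apply, smul_eq_mul, fTheta_mul_mul, Finset.mul_sum]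

lemma convexOn_pairSum {θ : ℝ} (hθ : θ ∈ Set.Icc (0 : ℝ) 1) :
    ConvexOn ℝ (Set.univ.pi fun _ : ι => Set.Ioi 0) (pairSum θ) := by
  refine ⟨convex_pi fun _ _ => convex_Ioi 0, fun v hv w hw a b ha hb hab => ?_⟩
  simp only [Set.mem_univ_pi, Set.mem_Ioi] at hv hw
  simp only [pairSum, Pi.add_apply, Pi.smul_apply, smul_eq_mul, Finset.mul_sum,
    ← Finset.sum_add_distrib]
  gcongr with i _ j _
  exact fTheta_convexComb_le hθ (hv i) (hv j) (hw i) (hw j) ha hb hab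

lemma sum_apply_ite_mem [DecidableEq ι] (F : ℝ → ℝ) (A : Finset ι) (x y : ℝ) :
    ∑ i, F (if i ∈ A then x else y) = A.card * F x + (Fintype.card ι - A.card) * F y := by
  simp only [apply_ite F, Finset.sum_ite, Finset.sum_const, nsmul_eq_mul]
  simp [Finset.filter_not, Finset.card_sdiff, Nat.cast_sub (Finset.card_le_univ A)]

lemma pairSum_ite_mem [DecidableEq ι] (θ : ℝ) (A : Finset ι) (x y : ℝ) :
    pairSum θ (fun i => if i ∈ A then x else y) =
      A.card * (Fintype.card ι - A.card) * (fTheta θ x y + fTheta θ y x) := by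
  simp only [pairSum, sum_apply_ite_mem (fTheta θ _), sum_apply_ite_mem (fun z =>
    (A.card : ℝ) * fTheta θ z x + (Fintype.card ι - A.card) * fTheta θ z y), fTheta_self]
  ring

end pairSum

theorem ConvexOn.le_of_forall_vertex_le {ι : Type*} [Fintype ι] [DecidableEq ι]
    {a b M : ℝ} {G : (ι → ℝ) → ℝ} (hG : ConvexOn ℝ (Set.univ.pi fun _ => Set.Icc a b) G)
    (hvert : ∀ v : ι → ℝ, (∀ i, v i = a ∨ v i = b) → G v ≤ M) {v : ι → ℝ}
    (hv : v ∈ Set.univ.pi fun _ => Set.Icc a b) : G v ≤ M := by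
  suffices h : ∀ s : Finset ι, ∀ v ∈ Set.univ.pi (fun _ => Set.Icc a b),
      (∀ i ∉ s, v i = a ∨ v i = b) → G v ≤ M from h Finset.univ v hv (by simp)
  intro s
  induction s using Finset.induction_on with
  | empty => exact fun v _ hv => hvert v fun i => hv i (Finset.notMem_empty i)
  | insert i s _ ih =>
    intro v hv hvs
    have hvi := hv i (Set.mem_univ i)
    have hab : a ≤ b := hvi.1.trans hvi.2
    have hupd : ∀ t ∈ Set.Icc a b, Function.update v i t ∈ Set.univ.pi fun _ => Set.Icc a b :=
      fun t ht => (Set.update_mem_pi_iff_of_mem hv).mpr fun _ => ht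
    have hend : ∀ t, t = a ∨ t = b → G (Function.update v i t) ≤ M := by
      intro t ht
      refine ih _ (hupd t (by rcases ht with rfl | rfl <;> simp [hab])) fun j hj => ?_
      rcases eq_or_ne j i with rfl | hji
      · simpa using ht
      · simpa [hji] using hvs j (by simp [hji, hj])
    obtain ⟨c, d, hc, hd, hcd, hvi_eq⟩ := Icc_subset_segment hvi
    have hseg : v ∈ segment ℝ (Function.update v i a) (Function.update v i b) := by
      refine ⟨c, d, hc, hd, hcd, funext fun j => ?_⟩
      rcases eq_or_ne j i with rfl | hji
      · simpa using hvi_eq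
      · simp [hji, ← add_mul, hcd]
    exact (hG.le_max_of_mem_segment (hupd a ⟨le_rfl, hab⟩) (hupd b ⟨hab, le_rfl⟩) hseg).trans
      (max_le (hend a (Or.inl rfl)) (hend b (Or.inr rfl)))

lemma isGreatest_maxK {n : ℕ} (hn : 2 ≤ n) (ε : ℝ) :
    IsGreatest {x : ℝ | ∃ k : ℕ, 1 ≤ k ∧ 2 * k ≤ n ∧
      x = ((k : ℝ) * ((n : ℝ) - (k : ℝ))) / ((k : ℝ) * Real.exp ε + (n : ℝ) - (k : ℝ))}
      (maxK n ε) := by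
  set S := {x : ℝ | ∃ k : ℕ, 1 ≤ k ∧ 2 * k ≤ n ∧
      x = ((k : ℝ) * ((n : ℝ) - (k : ℝ))) / ((k : ℝ) * Real.exp ε + (n : ℝ) - (k : ℝ))}
  have hne : S.Nonempty := ⟨_, 1, le_rfl, hn, rfl⟩
  have hfin : S.Finite := by
    refine ((Set.finite_Iic n).image fun k : ℕ =>
      ((k : ℝ) * ((n : ℝ) - (k : ℝ))) / ((k : ℝ) * Real.exp ε + (n : ℝ) - (k : ℝ))).subset ?_
    rintro x ⟨k, -, hk, rfl⟩
    exact ⟨k, Set.mem_Iic.2 (by omega), rfl⟩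
  exact ⟨hne.csSup_mem hfin, fun x hx => le_csSup hfin.bddAbove hx⟩

/-- The terms with `k > n / 2` are dominated by those with `n - k`, because `e ^ ε ≥ 1`. -/
lemma mul_sub_le_maxK_mul {n k : ℕ} {ε : ℝ} (hn : 2 ≤ n) (hε : 0 ≤ ε) (hk : k ≤ n) :
    (k : ℝ) * (n - k) ≤ maxK n ε * (k * Real.exp ε + n - k) := by
  have hE : 1 ≤ Real.exp ε := Real.one_le_exp hε
  have hden : ∀ j : ℕ, (0 : ℝ) < j * Real.exp ε + n - j := fun j => by
    have : (2 : ℝ) ≤ n := by exact_mod_cast hn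
    nlinarith [(Nat.cast_nonneg j : (0 : ℝ) ≤ j)]
  have hle : ∀ j : ℕ, 1 ≤ j → 2 * j ≤ n →
      (j : ℝ) * (n - j) ≤ maxK n ε * (j * Real.exp ε + n - j) := fun j hj1 hj2 =>
    (div_le_iff₀ (hden j)).1 ((isGreatest_maxK hn ε).2 ⟨j, hj1, hj2, rfl⟩)
  have hK : 0 ≤ maxK n ε := by
    obtain ⟨j, -, hj, hK⟩ := (isGreatest_maxK hn ε).1
    have : (j : ℝ) ≤ n := by exact_mod_cast (show j ≤ n by omega)
    rw [hK]
    exact div_nonneg (mul_nonneg j.cast_nonneg (by linarith)) (hden j).le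
  rcases Nat.eq_zero_or_pos k with rfl | hk0
  · simpa using mul_nonneg hK (hden 0).le
  by_cases h2k : 2 * k ≤ n
  · exact hle k hk0 h2k
  rcases hk.eq_or_lt with rfl | hlt
  · simpa using mul_nonneg hK (hden k).le
  have hj := hle (n - k) (by omega) (by omega)
  have h2k' : (n : ℝ) ≤ 2 * k := by exact_mod_cast (show n ≤ 2 * k by omega)
  push_cast [hk] at hj
  nlinarith [mul_nonneg hK (mul_nonneg (sub_nonneg.2 h2k') (sub_nonneg.2 hE))]

lemma pairSum_le_maxK_mul_sum_of_vertex {n : ℕ} {θ ε : ℝ} (hθ : θ ∈ Set.Icc (0 : ℝ) 1)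
    (hε : 0 ≤ ε) (hn : 2 ≤ n) (w : Fin n → ℝ) (hw : ∀ i, w i = 1 ∨ w i = Real.exp ε) :
    pairSum θ w ≤
      (fTheta θ (Real.exp ε) 1 + fTheta θ 1 (Real.exp ε)) * maxK n ε * ∑ i, w i := by
  set E := Real.exp ε
  have hE : 1 ≤ E := Real.one_le_exp hε
  set A := Finset.univ.filter fun i => w i = E
  have hwA : w = fun i => if i ∈ A then E else 1 := funext fun i => by
    rcases hw i with h | h <;> simp [A, h]
  have hF : 0 ≤ fTheta θ E 1 + fTheta θ 1 E :=
    add_nonneg (fTheta_nonneg hθ (by linarith) one_pos) (fTheta_nonneg hθ one_pos (by linarith))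
  have hsum := sum_apply_ite_mem id A E 1
  simp only [id, Fintype.card_fin] at hsum
  rw [hwA, pairSum_ite_mem, Fintype.card_fin, hsum]
  have := mul_le_mul_of_nonneg_left
    (mul_sub_le_maxK_mul hn hε (Finset.card_le_univ A |>.trans_eq (Fintype.card_fin n))) hF
  linarith

theorem pairSum_le_maxK_mul_sum {n : ℕ} {θ ε : ℝ} (hθ : θ ∈ Set.Icc (0 : ℝ) 1) (hε : 0 ≤ ε)
    (hn : 2 ≤ n) (v : Fin n → ℝ) (hv : ∀ i, 0 < v i) (hvε : ∀ i j, v i ≤ Real.exp ε * v j) :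
    pairSum θ v ≤
      (fTheta θ (Real.exp ε) 1 + fTheta θ 1 (Real.exp ε)) * maxK n ε * ∑ i, v i := by
  set E := Real.exp ε
  set C := (fTheta θ E 1 + fTheta θ 1 E) * maxK n ε
  have : Nonempty (Fin n) := ⟨⟨0, by omega⟩⟩
  obtain ⟨j₀, -, hj₀⟩ := Finset.exists_min_image Finset.univ v Finset.univ_nonempty
  set m := v j₀
  have hm : 0 < m := hv j₀
  set box := Set.univ.pi fun _ : Fin n => Set.Icc 1 E
  have hw : m⁻¹ • v ∈ box := fun i _ => by
    simp only [Pi.smul_apply, smul_eq_mul, Set.mem_Icc, ← div_eq_inv_mul]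
    exact ⟨(one_le_div hm).2 (hj₀ i (Finset.mem_univ i)), (div_le_iff₀ hm).2 (hvε i j₀)⟩
  have hconv : ConvexOn ℝ box (fun w => pairSum θ w - C * ∑ i, w i) := by
    have hbox : Convex ℝ box := convex_pi fun _ _ => convex_Icc 1 E
    refine ((convexOn_pairSum hθ).subset (Set.pi_mono fun _ _ x hx => ?_) hbox).sub
      ⟨hbox, fun x _ y _ a b _ _ _ => le_of_eq ?_⟩
    · exact lt_of_lt_of_le one_pos hx.1
    · simp only [Pi.add_apply, Pi.smul_apply, smul_eq_mul, Finset.sum_add_distrib,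
        ← Finset.mul_sum]
      ring
  have key := hconv.le_of_forall_vertex_le (fun w hw =>
    sub_nonpos.2 (pairSum_le_maxK_mul_sum_of_vertex hθ hε hn w hw)) hw
  have hv_eq : v = m • m⁻¹ • v := by rw [smul_inv_smul₀ hm.ne']
  rw [hv_eq, pairSum_smul]
  simp only [Pi.smul_apply, smul_eq_mul, ← Finset.mul_sum] at key ⊢
  nlinarith

lemma sum_ite_ne_Jc_eq_sum_pairSum {n d : ℕ} (θ : ℝ) (p : Fin n → Fin d → ℝ) :
    (∑ i, ∑ j, if i ≠ j then Jc θ (p i) (p j) else 0) = ∑ k, pairSum θ (fun i => p i k) := by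
  have hdiag : ∀ i j, (if i ≠ j then Jc θ (p i) (p j) else 0) = Jc θ (p i) (p j) := by
    intro i j
    split_ifs with h
    · rfl
    · rw [not_not.1 h, Jc_self]
  rw [Finset.sum_congr rfl fun i _ => Finset.sum_congr rfl fun j _ => hdiag i j]
  simp only [Jc_eq_sum_fTheta, pairSum]
  exact (Finset.sum_congr rfl fun _ _ => Finset.sum_comm).trans Finset.sum_comm

theorem avgPairsC_le {n d : ℕ} {θ ε : ℝ} (hθ : θ ∈ Set.Icc (0 : ℝ) 1) (hε : 0 ≤ ε)
    (hn : 2 ≤ n) (p : Fin n → Fin d → ℝ) (hp : IsDP ε p) (hpos : ∀ i k, 0 < p i k) :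
    avgPairsC θ p ≤
      (fTheta θ (Real.exp ε) 1 + fTheta θ 1 (Real.exp ε)) / ((n : ℝ) - 1) * maxK n ε := by
  set C := (fTheta θ (Real.exp ε) 1 + fTheta θ 1 (Real.exp ε)) * maxK n ε
  have hn' : (2 : ℝ) ≤ n := by exact_mod_cast hn
  have hsum : (∑ i, ∑ j, if i ≠ j then Jc θ (p i) (p j) else 0) ≤ C * n :=
    calc (∑ i, ∑ j, if i ≠ j then Jc θ (p i) (p j) else 0)
        = ∑ k, pairSum θ (fun i => p i k) := sum_ite_ne_Jc_eq_sum_pairSum θ p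
      _ ≤ ∑ k, C * ∑ i, p i k := Finset.sum_le_sum fun k _ =>
          pairSum_le_maxK_mul_sum hθ hε hn _ (fun i => hpos i k) fun i j => hp.2 i j k
      _ = C * n := by
          rw [← Finset.mul_sum, Finset.sum_comm]
          simp [fun i => (hp.1 i).2]
  rw [avgPairsC, div_le_iff₀ (by nlinarith)]
  calc _ ≤ C * n := hsum
    _ = _ := by
        simp only [C]
        field_simp [show (n : ℝ) - 1 ≠ 0 by linarith]

lemma sum_sum_ite_ne {α : Type*} [Fintype α] [DecidableEq α] (c : ℝ) :
    (∑ i : α, ∑ j : α, if i ≠ j then c else 0) =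
      Fintype.card α * (Fintype.card α - 1) * c := by
  simp only [Finset.sum_ite, Finset.filter_ne, Finset.sum_const, Finset.card_erase_of_mem,
    Finset.mem_univ, Finset.card_univ, nsmul_eq_mul, smul_zero, add_zero]
  rcases isEmpty_or_nonempty α with hα | hα
  · simp
  · rw [Nat.cast_sub Fintype.card_pos]
    ring

theorem minPairsC_le_avgPairsC {n d : ℕ} (θ : ℝ) (hn : 2 ≤ n) (p : Fin n → Fin d → ℝ) :
    minPairsC θ p ≤ avgPairsC θ p := by
  have hn' : (2 : ℝ) ≤ n := by exact_mod_cast hn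
  have hc := sum_sum_ite_ne (α := Fin n) (minPairsC θ p)
  rw [Fintype.card_fin] at hc
  rw [avgPairsC, le_div_iff₀ (by nlinarith), mul_comm, ← hc]
  refine Finset.sum_le_sum fun i _ => Finset.sum_le_sum fun j _ => ?_
  split_ifs with hij
  · exact ciInf_le (Finite.bddBelow_range _) (⟨(i, j), hij⟩ : {q : Fin n × Fin n // q.1 ≠ q.2})
  · exact le_rfl

theorem minPairsC_eq_and_avgPairsC_eq {n d : ℕ} (θ : ℝ) (hn : 2 ≤ n) (p : Fin n → Fin d → ℝ)
    {J : ℝ} (hJ : ∀ i j : Fin n, i ≠ j → Jc θ (p i) (p j) = J) :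
    minPairsC θ p = J ∧ avgPairsC θ p = J := by
  have hn' : (2 : ℝ) ≤ n := by exact_mod_cast hn
  have : Nonempty {q : Fin n × Fin n // q.1 ≠ q.2} :=
    ⟨⟨(⟨0, by omega⟩, ⟨1, by omega⟩), by simp [Fin.ext_iff]⟩⟩
  have hconst : (fun ij : {q : Fin n × Fin n // q.1 ≠ q.2} => Jc θ (p ij.1.1) (p ij.1.2)) =
      fun _ => J := funext fun ij => hJ _ _ ij.2
  have hsum : (∑ i, ∑ j, if i ≠ j then Jc θ (p i) (p j) else 0) = n * (n - 1) * J := by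
    have hc := sum_sum_ite_ne (α := Fin n) J
    rw [Fintype.card_fin] at hc
    rw [← hc]
    refine Finset.sum_congr rfl fun i _ => Finset.sum_congr rfl fun j _ => ?_
    split_ifs with hij
    exacts [hJ i j hij, rfl]
  refine ⟨?_, ?_⟩
  · rw [minPairsC, hconst, ciInf_const]
  · rw [avgPairsC, hsum, mul_div_cancel_left₀ _ (by nlinarith)]

section Perm

open Equiv

variable {α : Type*} [DecidableEq α]

lemma exists_perm_apply_eq_and_apply_eq {i j i' j' : α} (hij : i ≠ j) (hij' : i' ≠ j') :
    ∃ τ : Perm α, τ i' = i ∧ τ j' = j := by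
  refine ⟨swap (swap i' i j') j * swap i' i, ?_, by simp⟩
  have hi : swap i' i j' ≠ i := by
    rw [Ne, swap_apply_eq_iff, swap_apply_right]
    exact hij'.symm
  simp [swap_apply_of_ne_of_ne hi.symm hij]

variable [Fintype α]

lemma sum_perm_apply_eq (g : α → ℝ) (i i' : α) :
    ∑ σ : Perm α, g (σ i) = ∑ σ : Perm α, g (σ i') := by
  rw [← Equiv.sum_comp (Equiv.mulRight (swap i i')) fun σ => g (σ i')]
  simp

lemma sum_perm_apply_apply_eq (F : α → α → ℝ) {i j i' j' : α} (hij : i ≠ j) (hij' : i' ≠ j') :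
    ∑ σ : Perm α, F (σ i) (σ j) = ∑ σ : Perm α, F (σ i') (σ j') := by
  obtain ⟨τ, hi, hj⟩ := exists_perm_apply_eq_and_apply_eq hij hij'
  rw [← Equiv.sum_comp (Equiv.mulRight τ) fun σ => F (σ i') (σ j')]
  simp [hi, hj]

lemma card_mul_sum_perm_apply (g : α → ℝ) (i : α) :
    Fintype.card α * ∑ σ : Perm α, g (σ i) = (Fintype.card α).factorial * ∑ l, g l :=
  calc Fintype.card α * ∑ σ : Perm α, g (σ i)
      = ∑ i' : α, ∑ σ : Perm α, g (σ i') := by simp [sum_perm_apply_eq g _ i]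
    _ = ∑ σ : Perm α, ∑ l, g l := by
        rw [Finset.sum_comm]
        exact Finset.sum_congr rfl fun σ _ => Equiv.sum_comp σ g
    _ = (Fintype.card α).factorial * ∑ l, g l := by simp [Fintype.card_perm]

lemma card_mul_sum_perm_apply_apply (F : α → α → ℝ) (hF : ∀ l, F l l = 0) {i j : α}
    (hij : i ≠ j) :
    Fintype.card α * (Fintype.card α - 1) * ∑ σ : Perm α, F (σ i) (σ j) =
      (Fintype.card α).factorial * ∑ l, ∑ l', F l l' :=
  calc _ = ∑ i' : α, ∑ j' : α, ∑ σ : Perm α, F (σ i') (σ j') := by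
        rw [← sum_sum_ite_ne]
        refine Finset.sum_congr rfl fun i' _ => Finset.sum_congr rfl fun j' _ => ?_
        split_ifs with h
        · exact sum_perm_apply_apply_eq F hij h
        · simp [not_not.1 h, hF]
    _ = ∑ i' : α, ∑ σ : Perm α, ∑ j' : α, F (σ i') (σ j') :=
        Finset.sum_congr rfl fun _ _ => Finset.sum_comm
    _ = ∑ σ : Perm α, ∑ i' : α, ∑ j' : α, F (σ i') (σ j') := Finset.sum_comm
    _ = ∑ σ : Perm α, ∑ l, ∑ l', F l l' := Finset.sum_congr rfl fun σ _ =>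
        (Finset.sum_congr rfl fun i' _ => Equiv.sum_comp σ (F (σ i'))).trans
          (Equiv.sum_comp σ fun l => ∑ l', F l l')
    _ = (Fintype.card α).factorial * ∑ l, ∑ l', F l l' := by simp [Fintype.card_perm]

end Perm

/-- Coordinates are indexed by the permutations `σ` of the indices, with `p_i(σ) ∝ w (σ i)`;
as permutations act 2-transitively, every pair `i ≠ j` gets the same `J_θ`. -/
theorem exists_isDP_forall_Jc_eq {n : ℕ} {ε : ℝ} (θ : ℝ) (w : Fin n → ℝ) (hw : ∀ i, 0 < w i)
    (hwε : ∀ i j, w i ≤ Real.exp ε * w j) :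
    ∃ (d : ℕ) (p : Fin n → Fin d → ℝ), IsDP ε p ∧ (∀ i k, 0 < p i k) ∧
      ∀ i j, i ≠ j → Jc θ (p i) (p j) = pairSum θ w / ((n - 1) * ∑ l, w l) := by
  set e := Fintype.equivFin (Equiv.Perm (Fin n))
  set N : ℝ := (n - 1).factorial * ∑ l, w l
  have hN : ∀ i : Fin n, ∑ σ : Equiv.Perm (Fin n), w (σ i) = N := by
    intro i
    have hn : n ≠ 0 := i.pos.ne'
    have h := card_mul_sum_perm_apply w i
    rw [Fintype.card_fin, ← Nat.mul_factorial_pred hn, Nat.cast_mul, mul_assoc] at h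
    exact mul_left_cancel₀ (Nat.cast_ne_zero.2 hn) h
  have hNpos : ∀ i : Fin n, 0 < N := fun i =>
    hN i ▸ Finset.sum_pos (fun σ _ => hw _) Finset.univ_nonempty
  refine ⟨_, fun i k => w (e.symm k i) / N,
    ⟨fun i => ⟨fun k => (div_pos (hw _) (hNpos i)).le, ?_⟩, fun i j k => ?_⟩,
    fun i k => div_pos (hw _) (hNpos i), fun i j hij => ?_⟩
  · rw [← Finset.sum_div, Equiv.sum_comp e.symm fun σ => w (σ i), hN i,
      div_self (hNpos i).ne']
  · rw [mul_div_assoc']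
    exact div_le_div_of_nonneg_right (hwε _ _) (hNpos i).le
  · have hn : (2 : ℝ) ≤ n := by
      have := Fin.val_ne_iff.2 hij
      exact_mod_cast (show 2 ≤ n by omega)
    have key := card_mul_sum_perm_apply_apply (fun l l' => fTheta θ (w l) (w l'))
      (fun l => fTheta_self θ _) hij
    rw [← pairSum] at key
    rw [Fintype.card_fin, ← Nat.mul_factorial_pred (by omega)] at key
    calc Jc θ _ _ = N⁻¹ * ∑ σ : Equiv.Perm (Fin n), fTheta θ (w (σ i)) (w (σ j)) := by
          rw [Jc_eq_sum_fTheta, Equiv.sum_comp e.symm fun σ => fTheta θ (w (σ i) / N) (w (σ j) / N)]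
          simp only [div_eq_inv_mul, fTheta_mul_mul, Finset.mul_sum]
      _ = pairSum θ w / ((n - 1) * ∑ l, w l) := by
          have hX : (n - 1 : ℝ) * ∑ σ : Equiv.Perm (Fin n), fTheta θ (w (σ i)) (w (σ j)) =
              (n - 1).factorial * pairSum θ w := by
            refine mul_left_cancel₀ (show (n : ℝ) ≠ 0 by positivity) ?_
            push_cast at key
            linear_combination key
          have hsum : 0 < ∑ l, w l := Finset.sum_pos (fun l _ => hw l) ⟨i, Finset.mem_univ i⟩
          have hfac : (0 : ℝ) < (n - 1).factorial := by positivity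
          have hn1 : (n : ℝ) - 1 ≠ 0 := by linarith
          simp only [N]
          field_simp
          linear_combination hX

theorem exists_isDP_forall_Jc_eq_maxK {n : ℕ} {θ ε : ℝ} (hε : 0 ≤ ε) (hn : 2 ≤ n) :
    ∃ (d : ℕ) (p : Fin n → Fin d → ℝ), IsDP ε p ∧ (∀ i k, 0 < p i k) ∧
      ∀ i j, i ≠ j → Jc θ (p i) (p j) =
        (fTheta θ (Real.exp ε) 1 + fTheta θ 1 (Real.exp ε)) / ((n : ℝ) - 1) * maxK n ε := by
  have hE : 1 ≤ Real.exp ε := Real.one_le_exp hε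
  obtain ⟨k, -, hk, hK⟩ := (isGreatest_maxK hn ε).1
  obtain ⟨A, -, hA⟩ := Finset.exists_subset_card_eq (s := (Finset.univ : Finset (Fin n)))
    (n := k) (by simp only [Finset.card_univ, Fintype.card_fin]; omega)
  set w : Fin n → ℝ := fun i => if i ∈ A then Real.exp ε else 1
  obtain ⟨d, p, hp, hpos, hJ⟩ := exists_isDP_forall_Jc_eq θ w
    (fun i => by simp only [w]; split_ifs <;> positivity)
    (fun i j => by simp only [w]; split_ifs <;> nlinarith)
  refine ⟨d, p, hp, hpos, fun i j hij => ?_⟩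
  have hsum := sum_apply_ite_mem id A (Real.exp ε) 1
  simp only [id, Fintype.card_fin, hA] at hsum
  have hn' : (2 : ℝ) ≤ n := by exact_mod_cast hn
  have hden : (0 : ℝ) < k * Real.exp ε + n - k := by nlinarith [(Nat.cast_nonneg k : (0 : ℝ) ≤ k)]
  rw [hJ i j hij, pairSum_ite_mem, hsum, Fintype.card_fin, hA, hK, mul_one, ← add_sub_assoc]
  field_simp [show (n : ℝ) - 1 ≠ 0 by linarith]

/-- the sup over `ε`-DP `n`-tuples of the average of `J_θ(p_i,p_j)` over
ordered pairs `i ≠ j` equals the sup of the minimum, and both equal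
`((f_θ(e^ε,1)+f_θ(1,e^ε))/(n−1)) · max_{1 ≤ k ≤ n/2} k(n−k)/(k e^ε + n − k)`. -/
theorem statement1 (θ ε : ℝ) (hθ : θ ∈ Set.Icc (0 : ℝ) 1) (hε : 0 < ε)
    (n : ℕ) (hn : 2 ≤ n) :
    MCavg n ε θ = MC n ε θ ∧
    MC n ε θ =
      (fTheta θ (Real.exp ε) 1 + fTheta θ 1 (Real.exp ε)) / ((n : ℝ) - 1) * maxK n ε := by
  set T := (fTheta θ (Real.exp ε) 1 + fTheta θ 1 (Real.exp ε)) / ((n : ℝ) - 1) * maxK n ε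
  obtain ⟨d, p, hp, hpos, hJ⟩ := exists_isDP_forall_Jc_eq_maxK (θ := θ) hε.le hn
  obtain ⟨hmin, havg⟩ := minPairsC_eq_and_avgPairsC_eq θ hn p hJ
  have hMCavg : IsGreatest {x : ℝ | ∃ (d : ℕ) (p : Fin n → Fin d → ℝ),
      IsDP ε p ∧ (∀ i k, 0 < p i k) ∧ x = avgPairsC θ p} T := by
    refine ⟨⟨d, p, hp, hpos, havg.symm⟩, ?_⟩
    rintro x ⟨d, p, hp, hpos, rfl⟩
    exact avgPairsC_le hθ hε.le hn p hp hpos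
  have hMC : IsGreatest {x : ℝ | ∃ (d : ℕ) (p : Fin n → Fin d → ℝ),
      IsDP ε p ∧ (∀ i k, 0 < p i k) ∧ x = minPairsC θ p} T := by
    refine ⟨⟨d, p, hp, hpos, hmin.symm⟩, ?_⟩
    rintro x ⟨d, p, hp, hpos, rfl⟩
    exact (minPairsC_le_avgPairsC θ hn p).trans (avgPairsC_le hθ hε.le hn p hp hpos)
  rw [MCavg, MC, hMCavg.csSup_eq, hMC.csSup_eq]
  exact ⟨rfl, rfl⟩

end
end

section
/- Let ψ : (0,∞)² → ℝ be sublinear (ψ(x+y) ≤ ψ(x)+ψ(y) and ψ(αx) = αψ(x) for x,y ∈ (0,∞)², α > 0) with ψ(1,1) = 0, and define Ψ(p,q) = Σ_{k : p(k),q(k) > 0} ψ(p(k),q(k)) for probability vectors p,q. Then for all ε > 0 and integers n ≥ 2, the supremum over ε-DP n-tuples (p_i) of min_{i≠j} Ψ(p_i,p_j) equals the supremum over ε-DP n-tuples of avg_{i≠j} Ψ(p_i,p_j), and both equal ((ψ(e^ε,1) + ψ(1,e^ε))/(n−1)) · max_{1 ≤ k ≤ ⌊n/2⌋} k(n−k)/(k·e^ε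 + n − k). -/
open scoped BigOperators Classical ComplexOrder
open Matrix

noncomputable section

/-- `Ψ(p,q) = Σ_{k : p(k),q(k)>0} ψ(p(k),q(k))`. -/
def PsiSum {d : ℕ} (ψ : ℝ → ℝ → ℝ) (p q : Fin d → ℝ) : ℝ :=
  ∑ k, if 0 < p k ∧ 0 < q k then ψ (p k) (q k) else 0

/-!
Write `S = e^ε` and `K = ψ(S,1) + ψ(1,S)`. In each coordinate of an `ε`-DP tuple the values `t_i`
lie in a band `[a, S a]`. Subtracting the largest multiple `c (S·1_B + 1_{Bᶜ})`, `B = {i | a < t_i}`,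
that keeps the rest in the band `[a - c, S (a - c)]` merges one more level of `t` into the bottom
one, so `t` is a finite sum of such two-valued vectors. A two-valued vector contributes
`|B| (n - |B|) c K` to `∑_{i ≠ j} ψ(t_i, t_j)` for a mass of `c (|B| S + n - |B|)`, so by
subadditivity each coordinate contributes at most `K · maxK n ε` times its mass. Summing over the
coordinates bounds the average of `Ψ(p_i, p_j)` over pairs, hence also the minimum, by
`K · maxK n ε / (n - 1)`. For the optimal `k`, the tuple indexed by the `k`-subsets `A` of `[n]`
with `p_i(A)` proportional to `S` if `i ∈ A` and to `1` otherwise attains this bound at every pair.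
-/

open Finset

structure SublinearOnPos (ψ : ℝ → ℝ → ℝ) : Prop where
  add_le : ∀ a b a' b' : ℝ, 0 < a → 0 < b → 0 < a' → 0 < b' →
    ψ (a + a') (b + b') ≤ ψ a b + ψ a' b'
  smul : ∀ c a b : ℝ, 0 < c → 0 < a → 0 < b → ψ (c * a) (c * b) = c * ψ a b

namespace SublinearOnPos

variable {ψ : ℝ → ℝ → ℝ}

theorem apply_self (hψ : SublinearOnPos ψ) (h11 : ψ 1 1 = 0) {x : ℝ} (hx : 0 < x) :
    ψ x x = 0 := by
  simpa [h11] using hψ.smul x 1 1 hx one_pos one_pos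

theorem apply_mul_mul_one (hψ : SublinearOnPos ψ) {c S : ℝ} (hc : 0 < c) (hS : 0 < S) :
    ψ (c * S) c = c * ψ S 1 := by
  simpa using hψ.smul c S 1 hc hS one_pos

theorem apply_mul_one_mul (hψ : SublinearOnPos ψ) {c S : ℝ} (hc : 0 < c) (hS : 0 < S) :
    ψ c (c * S) = c * ψ 1 S := by
  simpa using hψ.smul c 1 S hc one_pos hS

theorem apply_add_apply_swap_nonneg (hψ : SublinearOnPos ψ) (h11 : ψ 1 1 = 0) {S : ℝ}
    (hS : 0 < S) : 0 ≤ ψ S 1 + ψ 1 S := by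
  have h := hψ.add_le S 1 1 S hS one_pos one_pos hS
  rwa [add_comm 1 S, hψ.apply_self h11 (by linarith)] at h

end SublinearOnPos

section OffDiag

variable {ι : Type*} [Fintype ι] [DecidableEq ι]

def offDiagSum (f : ι → ι → ℝ) : ℝ := ∑ i, ∑ j, if i ≠ j then f i j else 0

theorem offDiagSum_const (x : ℝ) :
    offDiagSum (fun _ _ : ι ↦ x) = Fintype.card ι * (Fintype.card ι - 1) * x := by
  simp only [offDiagSum, ← sum_filter, filter_ne, sum_const,
    card_erase_of_mem (mem_univ _), card_univ, nsmul_eq_mul]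
  rcases (Fintype.card ι).eq_zero_or_pos with h | h
  · simp [h]
  · rw [Nat.cast_sub h]
    ring

theorem offDiagSum_eq_sum {f : ι → ι → ℝ} (hf : ∀ i, f i i = 0) :
    offDiagSum f = ∑ i, ∑ j, f i j := by
  refine sum_congr rfl fun i _ ↦ sum_congr rfl fun j _ ↦ ?_
  split_ifs with h
  · rfl
  · rw [not_not.mp h, hf]

theorem offDiagSum_mono {f g : ι → ι → ℝ} (h : ∀ i j, i ≠ j → f i j ≤ g i j) :
    offDiagSum f ≤ offDiagSum g :=
  sum_le_sum fun i _ ↦ sum_le_sum fun j _ ↦ by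
    split_ifs with hij
    · exact h i j hij
    · rfl

theorem offDiagSum_add (f g : ι → ι → ℝ) :
    offDiagSum (fun i j ↦ f i j + g i j) = offDiagSum f + offDiagSum g := by
  simp only [offDiagSum, ← sum_add_distrib]
  refine sum_congr rfl fun i _ ↦ sum_congr rfl fun j _ ↦ ?_
  split_ifs <;> simp

theorem offDiagSum_sum {κ : Type*} [Fintype κ] (f : ι → ι → κ → ℝ) :
    offDiagSum (fun i j ↦ ∑ k, f i j k) = ∑ k, offDiagSum (fun i j ↦ f i j k) := by
  simp only [offDiagSum, ite_sum_zero]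
  exact (sum_congr rfl fun _ _ ↦ sum_comm).trans sum_comm

theorem ciInf_le_offDiagSum_div (hι : 2 ≤ Fintype.card ι) (f : ι → ι → ℝ) :
    ⨅ ij : {q : ι × ι // q.1 ≠ q.2}, f ij.val.1 ij.val.2 ≤
      offDiagSum f / (Fintype.card ι * (Fintype.card ι - 1)) := by
  have hpos : (0 : ℝ) < Fintype.card ι * (Fintype.card ι - 1) := by
    have : (2 : ℝ) ≤ Fintype.card ι := by exact_mod_cast hι
    nlinarith
  rw [le_div_iff₀ hpos, mul_comm, ← offDiagSum_const]
  exact offDiagSum_mono fun i j hij ↦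
    ciInf_le (Set.finite_range _).bddBelow (⟨(i, j), hij⟩ : {q : ι × ι // q.1 ≠ q.2})

end OffDiag

theorem sum_ite_mem_const {ι : Type*} [Fintype ι] [DecidableEq ι] (B : Finset ι) (x y : ℝ) :
    ∑ i, (if i ∈ B then x else y) = #B * x + (Fintype.card ι - #B) * y := by
  simp [sum_ite, filter_not, card_sdiff,
    Nat.cast_sub (card_le_univ B)]

section TwoValued

variable {ι : Type*} [DecidableEq ι] {ψ : ℝ → ℝ → ℝ}

def twoValued (B : Finset ι) (c S : ℝ) (i : ι) : ℝ := if i ∈ B then c * S else c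

theorem twoValued_pos {B : Finset ι} {c S : ℝ} (hc : 0 < c) (hS : 0 < S) (i : ι) :
    0 < twoValued B c S i := by
  unfold twoValued; split_ifs <;> positivity

theorem twoValued_le_mul_twoValued {B : Finset ι} {c S : ℝ} (hc : 0 ≤ c) (hS : 1 ≤ S)
    (i j : ι) : twoValued B c S i ≤ S * twoValued B c S j := by
  have h₁ : c ≤ c * S := le_mul_of_one_le_right hc hS
  have h₂ : c * S ≤ S * (c * S) := le_mul_of_one_le_left (h₁.trans' hc) hS
  unfold twoValued; split_ifs <;> linarith

theorem sum_twoValued [Fintype ι] (B : Finset ι) (c S : ℝ) :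
    ∑ i, twoValued B c S i = c * (#B * S + (Fintype.card ι - #B)) := by
  simp only [twoValued, sum_ite_mem_const]
  ring

theorem SublinearOnPos.apply_twoValued (hψ : SublinearOnPos ψ) (h11 : ψ 1 1 = 0)
    (B : Finset ι) {c S : ℝ} (hc : 0 < c) (hS : 0 < S) (i j : ι) :
    ψ (twoValued B c S i) (twoValued B c S j) =
      (if i ∈ B ∧ j ∉ B then c * ψ S 1 else 0) + (if i ∉ B ∧ j ∈ B then c * ψ 1 S else 0) := by
  unfold twoValued
  by_cases hi : i ∈ B <;> by_cases hj : j ∈ B <;>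
    simp [hi, hj, hψ.apply_self h11, hψ.apply_mul_mul_one, hψ.apply_mul_one_mul, hc, hS,
      mul_pos hc hS]

theorem SublinearOnPos.offDiagSum_twoValued [Fintype ι] (hψ : SublinearOnPos ψ)
    (h11 : ψ 1 1 = 0) (B : Finset ι) {c S : ℝ} (hc : 0 < c) (hS : 0 < S) :
    offDiagSum (fun i j ↦ ψ (twoValued B c S i) (twoValued B c S j)) =
      #B * (Fintype.card ι - #B) * c * (ψ S 1 + ψ 1 S) := by
  rw [offDiagSum_eq_sum fun i ↦ by simp [hψ.apply_twoValued h11 B hc hS]]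
  simp only [hψ.apply_twoValued h11 B hc hS, sum_add_distrib, ite_and, ite_not,
    sum_ite_irrel, sum_const_zero, sum_ite_mem_const]
  ring

end TwoValued

section KeyInequality

variable {ι : Type*} [Fintype ι] [DecidableEq ι] {ψ : ℝ → ℝ → ℝ}

theorem SublinearOnPos.offDiagSum_twoValued_le (hψ : SublinearOnPos ψ) (h11 : ψ 1 1 = 0)
    (B : Finset ι) {c S G : ℝ} (hc : 0 < c) (hS : 0 < S)
    (hG : ∀ k ≤ Fintype.card ι,
      (k : ℝ) * (Fintype.card ι - k) ≤ G * (k * S + Fintype.card ι - k)) :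
    offDiagSum (fun i j ↦ ψ (twoValued B c S i) (twoValued B c S j)) ≤
      (ψ S 1 + ψ 1 S) * G * ∑ i, twoValued B c S i := by
  rw [hψ.offDiagSum_twoValued h11 B hc hS, sum_twoValued]
  have hK := mul_nonneg hc.le (hψ.apply_add_apply_swap_nonneg h11 hS)
  linear_combination mul_le_mul_of_nonneg_left (hG #B (card_le_univ B)) hK

theorem exists_twoValued_sub_mem_Icc {t : ι → ℝ} {a S : ℝ} (hS : 1 < S)
    (ht : ∀ i, t i ∈ Set.Icc a (S * a)) (hB : ({i | a < t i} : Finset ι).Nonempty) :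
    ∃ c, 0 < c ∧ c ≤ a ∧
      (∀ i, t i - twoValued {i | a < t i} c S i ∈ Set.Icc (a - c) (S * (a - c))) ∧
      #{i | a - c < t i - twoValued {i | a < t i} c S i} < #{i | a < t i} := by
  set B : Finset ι := {i | a < t i}
  have hmemB : ∀ i, i ∈ B ↔ a < t i := by simp [B]
  have hS1 : 0 < S - 1 := by linarith
  set c := B.inf' hB fun i ↦ (t i - a) / (S - 1) with hc
  obtain ⟨i₁, hi₁, hc₁⟩ := B.exists_mem_eq_inf' hB fun i ↦ (t i - a) / (S - 1)
  have hcle : ∀ i ∈ B, c * (S - 1) ≤ t i - a := fun i hi ↦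
    (le_div_iff₀ hS1).1 (B.inf'_le _ hi)
  have hci₁ : c * (S - 1) = t i₁ - a := by rw [← hc] at hc₁; rw [hc₁]; field_simp
  have hcpos : 0 < c := (B.lt_inf'_iff hB).2 fun i hi ↦
    div_pos (by linarith [(hmemB i).1 hi]) hS1
  have hout : ∀ i ∉ B, t i = a := fun i hi ↦
    le_antisymm (not_lt.1 ((hmemB i).not.1 hi)) (ht i).1
  refine ⟨c, hcpos, by nlinarith [(ht i₁).2], fun i ↦ ?_, ?_⟩
  · by_cases hi : i ∈ B
    · simp only [twoValued, if_pos hi, Set.mem_Icc]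
      constructor <;> nlinarith [hcle i hi, (ht i).2]
    · simp only [twoValued, if_neg hi, hout i hi, Set.mem_Icc]
      constructor <;> nlinarith [hcle i₁ hi₁, (ht i₁).2]
  · refine (card_le_card fun i hi ↦ ?_).trans_lt (card_erase_lt_of_mem hi₁)
    simp only [mem_filter, mem_univ, true_and] at hi
    rw [mem_erase]
    constructor
    · rintro rfl
      simp only [twoValued, if_pos hi₁] at hi
      linarith
    · by_contra hiB
      simp only [twoValued, if_neg hiB, hout i hiB] at hi
      linarith

theorem SublinearOnPos.offDiagSum_le_of_mem_Icc (hψ : SublinearOnPos ψ) (h11 : ψ 1 1 = 0)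
    {S G : ℝ} (hS : 1 < S)
    (hG : ∀ k ≤ Fintype.card ι,
      (k : ℝ) * (Fintype.card ι - k) ≤ G * (k * S + Fintype.card ι - k))
    {t : ι → ℝ} {a : ℝ} (ha : 0 < a) (ht : ∀ i, t i ∈ Set.Icc a (S * a)) :
    offDiagSum (fun i j ↦ ψ (t i) (t j)) ≤ (ψ S 1 + ψ 1 S) * G * ∑ i, t i := by
  induction hN : #{i | a < t i} using Nat.strong_induction_on generalizing t a with
  | _ N ih =>
  rcases ({i | a < t i} : Finset ι).eq_empty_or_nonempty with hB | hB
  · have htu : t = twoValued ∅ a S := funext fun i ↦ by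
      have : ¬ a < t i := fun h ↦ eq_empty_iff_forall_notMem.1 hB i (by simpa using h)
      simp [twoValued, le_antisymm (not_lt.1 this) (ht i).1]
    rw [htu]
    exact hψ.offDiagSum_twoValued_le h11 ∅ ha (by linarith) hG
  obtain ⟨c, hc, hca, hv, hlt⟩ := exists_twoValued_sub_mem_Icc hS ht hB
  set u := twoValued {i | a < t i} c S
  have hupos : ∀ i, 0 < u i := twoValued_pos hc (by linarith)
  have hu := hψ.offDiagSum_twoValued_le h11 {i | a < t i} hc (by linarith) hG
  rcases hca.lt_or_eq with hca | rfl
  · have hvpos : ∀ i, 0 < t i - u i := fun i ↦ (sub_pos.2 hca).trans_le (hv i).1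
    have hvle := ih _ (hN ▸ hlt) (sub_pos.2 hca) hv rfl
    calc offDiagSum (fun i j ↦ ψ (t i) (t j))
        ≤ offDiagSum (fun i j ↦ ψ (u i) (u j) + ψ (t i - u i) (t j - u j)) :=
          offDiagSum_mono fun i j _ ↦ by
            simpa using hψ.add_le _ _ _ _ (hupos i) (hupos j) (hvpos i) (hvpos j)
      _ ≤ (ψ S 1 + ψ 1 S) * G * ∑ i, u i + (ψ S 1 + ψ 1 S) * G * ∑ i, (t i - u i) := by
          rw [offDiagSum_add]
          exact add_le_add hu hvle
      _ = (ψ S 1 + ψ 1 S) * G * ∑ i, t i := by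
          rw [← mul_add, ← sum_add_distrib]
          simp
  · have htu : t = u := funext fun i ↦ by
      have := hv i
      simp only [sub_self, mul_zero, Set.Icc_self, Set.mem_singleton_iff] at this
      linarith
    rwa [htu]

end KeyInequality

theorem SublinearOnPos.offDiagSum_ite_pos_le {ι : Type*} [Fintype ι] [DecidableEq ι]
    {ψ : ℝ → ℝ → ℝ} (hψ : SublinearOnPos ψ) (h11 : ψ 1 1 = 0) {S G : ℝ} (hS : 1 < S)
    (hG : ∀ k ≤ Fintype.card ι,
      (k : ℝ) * (Fintype.card ι - k) ≤ G * (k * S + Fintype.card ι - k))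
    {t : ι → ℝ} (ht₀ : ∀ i, 0 ≤ t i) (ht : ∀ i j, t i ≤ S * t j) :
    offDiagSum (fun i j ↦ if 0 < t i ∧ 0 < t j then ψ (t i) (t j) else 0) ≤
      (ψ S 1 + ψ 1 S) * G * ∑ i, t i := by
  by_cases hzero : ∃ i, t i = 0
  · obtain ⟨i₀, hi₀⟩ := hzero
    have hall : ∀ i, t i = 0 := fun i ↦ le_antisymm (by simpa [hi₀] using ht i i₀) (ht₀ i)
    simp [offDiagSum, hall]
  have hpos : ∀ i, 0 < t i := fun i ↦ (ht₀ i).lt_of_ne fun h ↦ hzero ⟨i, h.symm⟩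
  rcases isEmpty_or_nonempty ι with hι | hι
  · simp [offDiagSum]
  obtain ⟨i₀, -, hi₀⟩ := univ.exists_mem_eq_inf' univ_nonempty t
  simp only [hpos, and_self, if_true]
  refine hψ.offDiagSum_le_of_mem_Icc h11 hS hG (hpos i₀) fun i ↦ ⟨?_, ht i i₀⟩
  exact hi₀ ▸ inf'_le t (mem_univ i)

theorem SublinearOnPos.offDiagSum_psiSum_le {ψ : ℝ → ℝ → ℝ} (hψ : SublinearOnPos ψ)
    (h11 : ψ 1 1 = 0) {n d : ℕ} {ε G : ℝ} (hε : 0 < ε)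
    (hG : ∀ k ≤ n, (k : ℝ) * (n - k) ≤ G * (k * Real.exp ε + n - k))
    {p : Fin n → Fin d → ℝ} (hp : IsDP ε p) :
    offDiagSum (fun i j ↦ PsiSum ψ (p i) (p j)) ≤
      (ψ (Real.exp ε) 1 + ψ 1 (Real.exp ε)) * G * n := by
  have hS : 1 < Real.exp ε := Real.one_lt_exp_iff.2 hε
  unfold PsiSum
  rw [offDiagSum_sum]
  calc ∑ k, offDiagSum (fun i j ↦ if 0 < p i k ∧ 0 < p j k then ψ (p i k) (p j k) else 0)
      ≤ ∑ k, (ψ (Real.exp ε) 1 + ψ 1 (Real.exp ε)) * G * ∑ i, p i k :=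
        sum_le_sum fun k _ ↦ hψ.offDiagSum_ite_pos_le h11 hS (by simpa using hG)
          (fun i ↦ (hp.1 i).1 k) fun i j ↦ hp.2 i j k
    _ = (ψ (Real.exp ε) 1 + ψ 1 (Real.exp ε)) * G * n := by
        rw [← mul_sum, sum_comm]
        simp [fun i ↦ (hp.1 i).2]

theorem maxK_set_finite (n : ℕ) (ε : ℝ) :
    {x : ℝ | ∃ k : ℕ, 1 ≤ k ∧ 2 * k ≤ n ∧
      x = ((k : ℝ) * ((n : ℝ) - (k : ℝ))) / ((k : ℝ) * Real.exp ε + (n : ℝ) - (k : ℝ))}.Finite :=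
  ((Set.finite_Iic n).image fun k : ℕ ↦
      ((k : ℝ) * ((n : ℝ) - (k : ℝ))) / ((k : ℝ) * Real.exp ε + (n : ℝ) - (k : ℝ))).subset
    fun _ ⟨k, _, hk, hx⟩ ↦ ⟨k, by simp only [Set.mem_Iic]; omega, hx.symm⟩

theorem le_maxK {n k : ℕ} (ε : ℝ) (hk : 1 ≤ k) (hkn : 2 * k ≤ n) :
    ((k : ℝ) * ((n : ℝ) - (k : ℝ))) / ((k : ℝ) * Real.exp ε + (n : ℝ) - (k : ℝ)) ≤ maxK n ε :=
  le_csSup (maxK_set_finite n ε).bddAbove ⟨k, hk, hkn, rfl⟩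

theorem exists_maxK_eq {n : ℕ} (ε : ℝ) (hn : 2 ≤ n) :
    ∃ k : ℕ, 1 ≤ k ∧ 2 * k ≤ n ∧
      maxK n ε = ((k : ℝ) * ((n : ℝ) - (k : ℝ))) / ((k : ℝ) * Real.exp ε + (n : ℝ) - (k : ℝ)) := by
  refine Set.Nonempty.csSup_mem ?_ (maxK_set_finite n ε)
  exact ⟨_, 1, le_rfl, hn, rfl⟩

theorem mul_le_maxK_mul {n k : ℕ} {ε : ℝ} (hε : 0 ≤ ε) (hn : 2 ≤ n) (hk : k ≤ n) :
    (k : ℝ) * (n - k) ≤ maxK n ε * (k * Real.exp ε + n - k) := by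
  have hS : 1 ≤ Real.exp ε := Real.one_le_exp hε
  have hbound : ∀ k : ℕ, 1 ≤ k → 2 * k ≤ n →
      (k : ℝ) * (n - k) ≤ maxK n ε * (k * Real.exp ε + n - k) := fun k hk hkn ↦ by
    have hkn' : (2 * k : ℝ) ≤ n := by exact_mod_cast hkn
    have hk' : (1 : ℝ) ≤ k := by exact_mod_cast hk
    exact (div_le_iff₀ (by nlinarith)).1 (le_maxK ε hk hkn)
  have hmax : 0 ≤ maxK n ε := by
    have hn' : (2 : ℝ) ≤ n := by exact_mod_cast hn
    refine le_trans ?_ (le_maxK ε le_rfl hn)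
    push_cast
    exact div_nonneg (by linarith) (by linarith)
  rcases Nat.eq_zero_or_pos k with rfl | hk1
  · simpa using mul_nonneg hmax (Nat.cast_nonneg n)
  rcases le_or_gt (2 * k) n with hkn | hkn
  · exact hbound k hk1 hkn
  have hkn' : (n : ℝ) < 2 * k := by exact_mod_cast hkn
  rcases hk.eq_or_lt with rfl | hlt
  · simpa using mul_nonneg hmax (mul_nonneg (Nat.cast_nonneg k) (by linarith))
  -- use `n - k`: same numerator, and the denominator `(n - k) S + k` is smaller
  have h := hbound (n - k) (by omega) (by omega)
  push_cast [Nat.cast_sub hk] at h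
  nlinarith [mul_nonneg hmax (mul_nonneg (by linarith : (0 : ℝ) ≤ 2 * k - n)
    (by linarith : (0 : ℝ) ≤ Real.exp ε - 1))]

theorem choose_sub_two_div {n k : ℕ} (hk : k + 1 < n) {S : ℝ} (hS : 0 < S) :
    ((n - 2).choose k : ℝ) / (S * (n - 1).choose k + (n - 1).choose (k + 1)) =
      (k + 1) * (n - (k + 1)) / ((n - 1) * ((k + 1) * S + n - (k + 1))) := by
  obtain ⟨m, rfl⟩ : ∃ m, n = m + 2 := ⟨n - 2, by omega⟩
  have hkm : (k : ℝ) ≤ m := by exact_mod_cast (by omega : k ≤ m)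
  have h₁ := congrArg (Nat.cast : ℕ → ℝ) (Nat.add_one_mul_choose_eq m k)
  have h₂ := congrArg (Nat.cast : ℕ → ℝ) (Nat.choose_succ_right_eq (m + 1) k)
  push_cast [Nat.cast_sub (by omega : k ≤ m + 1)] at h₁ h₂
  simp only [Nat.add_sub_cancel, show m + 2 - 1 = m + 1 by omega]
  have hb : (0 : ℝ) < (m + 1).choose k := by exact_mod_cast Nat.choose_pos (by omega)
  have hkS : (0 : ℝ) < (k + 1) * S := by positivity
  rw [div_eq_div_iff (by positivity) (by push_cast; nlinarith)]
  push_cast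
  linear_combination ((k + 1) * S + m + 1 - k) * h₁ + (k + 1) * S * h₂

section Design

variable {ι : Type*} [Fintype ι] [DecidableEq ι]

theorem card_filter_mem_powersetCard (i : ι) (k : ℕ) :
    #{A ∈ powersetCard (k + 1) (univ : Finset ι) | i ∈ A} = (Fintype.card ι - 1).choose k := by
  have h := card_filter_powersetCard_subset {i} univ (k + 1) (subset_univ _) (by simp)
  simpa using h

theorem card_filter_notMem_powersetCard (i : ι) (k : ℕ) :
    #{A ∈ powersetCard k (univ : Finset ι) | i ∉ A} = (Fintype.card ι - 1).choose k := by
  have h : {A ∈ powersetCard k (univ : Finset ι) | i ∉ A} = powersetCard k (univ.erase i) := by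
    ext A
    simp [mem_powersetCard, subset_erase, and_comm]
  simp [h, card_powersetCard]

theorem card_filter_mem_notMem_powersetCard {i j : ι} (hij : i ≠ j) (k : ℕ) :
    #{A ∈ powersetCard (k + 1) (univ : Finset ι) | i ∈ A ∧ j ∉ A} =
      (Fintype.card ι - 2).choose k := by
  have h : {A ∈ powersetCard (k + 1) (univ : Finset ι) | i ∈ A ∧ j ∉ A} =
      {A ∈ powersetCard (k + 1) (univ.erase j) | {i} ⊆ A} := by
    ext A
    simp [mem_powersetCard, subset_erase]
    tauto
  rw [h, card_filter_powersetCard_subset {i} _ (k + 1) (by simpa using hij) (by simp)]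
  simp [Nat.sub_sub]

theorem sum_twoValued_powersetCard (i : ι) (k : ℕ) (c S : ℝ) :
    ∑ A ∈ powersetCard (k + 1) (univ : Finset ι), twoValued A c S i =
      c * (S * (Fintype.card ι - 1).choose k + (Fintype.card ι - 1).choose (k + 1)) := by
  simp only [twoValued]
  rw [sum_ite, sum_const, sum_const, card_filter_mem_powersetCard,
    card_filter_notMem_powersetCard, nsmul_eq_mul, nsmul_eq_mul]
  ring

theorem SublinearOnPos.sum_apply_twoValued_powersetCard {ψ : ℝ → ℝ → ℝ}
    (hψ : SublinearOnPos ψ) (h11 : ψ 1 1 = 0) {i j : ι} (hij : i ≠ j) (k : ℕ) {c S : ℝ}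
    (hc : 0 < c) (hS : 0 < S) :
    ∑ A ∈ powersetCard (k + 1) (univ : Finset ι), ψ (twoValued A c S i) (twoValued A c S j) =
      (Fintype.card ι - 2).choose k * c * (ψ S 1 + ψ 1 S) := by
  simp only [hψ.apply_twoValued h11 _ hc hS, sum_add_distrib, ← sum_filter, sum_const,
    nsmul_eq_mul, and_comm (a := i ∉ _), card_filter_mem_notMem_powersetCard hij,
    card_filter_mem_notMem_powersetCard hij.symm]
  ring

end Design

theorem exists_isDP_psiSum_eq_sum {n : ℕ} {α : Type*} (s : Finset α) (ψ : ℝ → ℝ → ℝ) {ε : ℝ}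
    (q : Fin n → α → ℝ) (hq₀ : ∀ i, ∀ a ∈ s, 0 < q i a) (hq₁ : ∀ i, ∑ a ∈ s, q i a = 1)
    (hq : ∀ i j, ∀ a ∈ s, q i a ≤ Real.exp ε * q j a) :
    ∃ (d : ℕ) (p : Fin n → Fin d → ℝ), IsDP ε p ∧
      ∀ i j, PsiSum ψ (p i) (p j) = ∑ a ∈ s, ψ (q i a) (q j a) := by
  set e := s.equivFin
  have hsum (f : α → ℝ) : ∑ m, f (e.symm m) = ∑ a ∈ s, f a :=
    (Equiv.sum_comp e.symm fun a : s ↦ f a).trans (sum_coe_sort s f)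
  refine ⟨#s, fun i m ↦ q i (e.symm m),
    ⟨fun i ↦ ⟨fun m ↦ (hq₀ i _ (e.symm m).2).le, (hsum _).trans (hq₁ i)⟩,
      fun i j m ↦ hq i j _ (e.symm m).2⟩, fun i j ↦ ?_⟩
  rw [← hsum]
  exact sum_congr rfl fun m _ ↦ if_pos ⟨hq₀ i _ (e.symm m).2, hq₀ j _ (e.symm m).2⟩

theorem SublinearOnPos.exists_isDP_forall_psiSum_eq {ψ : ℝ → ℝ → ℝ} (hψ : SublinearOnPos ψ)
    (h11 : ψ 1 1 = 0) {n k : ℕ} (hk : 1 ≤ k) (hkn : k < n) {ε : ℝ} (hε : 0 ≤ ε) :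
    ∃ (d : ℕ) (p : Fin n → Fin d → ℝ), IsDP ε p ∧ ∀ i j, i ≠ j →
      PsiSum ψ (p i) (p j) = (ψ (Real.exp ε) 1 + ψ 1 (Real.exp ε)) / ((n : ℝ) - 1) *
        (((k : ℝ) * ((n : ℝ) - (k : ℝ))) / ((k : ℝ) * Real.exp ε + (n : ℝ) - (k : ℝ))) := by
  obtain ⟨k, rfl⟩ : ∃ k', k = k' + 1 := ⟨k - 1, by omega⟩
  set S := Real.exp ε
  have hS : 1 ≤ S := Real.one_le_exp hε
  set Z : ℝ := S * (n - 1).choose k + (n - 1).choose (k + 1)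
  have hZ : 0 < Z := by
    have : (0 : ℝ) < (n - 1).choose k := by exact_mod_cast Nat.choose_pos (by omega)
    positivity
  obtain ⟨d, p, hp, hpψ⟩ := exists_isDP_psiSum_eq_sum (powersetCard (k + 1) univ) ψ
    (fun (i : Fin n) A ↦ twoValued A Z⁻¹ S i)
    (fun i A _ ↦ twoValued_pos (inv_pos.2 hZ) (by linarith) i)
    (fun i ↦ by
      rw [sum_twoValued_powersetCard, Fintype.card_fin]
      exact inv_mul_cancel₀ hZ.ne')
    (fun i j A _ ↦ twoValued_le_mul_twoValued (inv_pos.2 hZ).le hS i j)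
  refine ⟨d, p, hp, fun i j hij ↦ ?_⟩
  rw [hpψ, hψ.sum_apply_twoValued_powersetCard h11 hij k (inv_pos.2 hZ) (by linarith),
    Fintype.card_fin, mul_comm, mul_div_assoc, ← div_eq_mul_inv,
    choose_sub_two_div hkn (by linarith)]
  push_cast
  field_simp

theorem SublinearOnPos.avg_psiSum_le {ψ : ℝ → ℝ → ℝ} (hψ : SublinearOnPos ψ)
    (h11 : ψ 1 1 = 0) {n d : ℕ} {ε : ℝ} (hε : 0 < ε) (hn : 2 ≤ n) {p : Fin n → Fin d → ℝ}
    (hp : IsDP ε p) :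
    offDiagSum (fun i j ↦ PsiSum ψ (p i) (p j)) / (n * (n - 1)) ≤
      (ψ (Real.exp ε) 1 + ψ 1 (Real.exp ε)) / ((n : ℝ) - 1) * maxK n ε := by
  have hn' : (2 : ℝ) ≤ n := by exact_mod_cast hn
  rw [div_le_iff₀ (by nlinarith)]
  refine (hψ.offDiagSum_psiSum_le h11 hε (fun k hk ↦ mul_le_maxK_mul hε.le hn hk) hp).trans_eq ?_
  field_simp [show (n : ℝ) - 1 ≠ 0 by linarith]

theorem ciInf_offDiag_eq {ι : Type*} [Nontrivial ι] {f : ι → ι → ℝ} {x : ℝ}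
    (h : ∀ i j, i ≠ j → f i j = x) :
    ⨅ ij : {q : ι × ι // q.1 ≠ q.2}, f ij.val.1 ij.val.2 = x := by
  obtain ⟨i, j, hij⟩ := exists_pair_ne ι
  have : Nonempty {q : ι × ι // q.1 ≠ q.2} := ⟨⟨(i, j), hij⟩⟩
  simp only [fun ij : {q : ι × ι // q.1 ≠ q.2} ↦ h _ _ ij.2, ciInf_const]

/-- for sublinear `ψ : (0,∞)² → ℝ` with `ψ(1,1)=0`, the supremum over `ε`-DP
`n`-tuples of `min_{i≠j} Ψ(p_i,p_j)` equals the supremum of `avg_{i≠j} Ψ(p_i,p_j)`, and both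
equal `((ψ(e^ε,1)+ψ(1,e^ε))/(n−1)) · max_{1 ≤ k ≤ n/2} k(n−k)/(k e^ε + n − k)`. -/
theorem statement8 (ψ : ℝ → ℝ → ℝ)
    (hadd : ∀ a b a' b' : ℝ, 0 < a → 0 < b → 0 < a' → 0 < b' →
      ψ (a + a') (b + b') ≤ ψ a b + ψ a' b')
    (hsmul : ∀ c a b : ℝ, 0 < c → 0 < a → 0 < b → ψ (c * a) (c * b) = c * ψ a b)
    (h11 : ψ 1 1 = 0)
    (ε : ℝ) (hε : 0 < ε) (n : ℕ) (hn : 2 ≤ n) :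
    sSup {x : ℝ | ∃ (d : ℕ) (p : Fin n → Fin d → ℝ), IsDP ε p ∧
        x = ⨅ ij : {q : Fin n × Fin n // q.1 ≠ q.2}, PsiSum ψ (p ij.val.1) (p ij.val.2)}
      = sSup {x : ℝ | ∃ (d : ℕ) (p : Fin n → Fin d → ℝ), IsDP ε p ∧
        x = (∑ i, ∑ j, if i ≠ j then PsiSum ψ (p i) (p j) else 0) /
          ((n : ℝ) * ((n : ℝ) - 1))} ∧
    sSup {x : ℝ | ∃ (d : ℕ) (p : Fin n → Fin d → ℝ), IsDP ε p ∧
        x = ⨅ ij : {q : Fin n × Fin n // q.1 ≠ q.2}, PsiSum ψ (p ij.val.1) (p ij.val.2)}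
      = (ψ (Real.exp ε) 1 + ψ 1 (Real.exp ε)) / ((n : ℝ) - 1) * maxK n ε := by
  have hψ : SublinearOnPos ψ := ⟨hadd, hsmul⟩
  have : Nontrivial (Fin n) := Fin.nontrivial_iff_two_le.2 hn
  have hmin_le_avg {d : ℕ} (p : Fin n → Fin d → ℝ) :
      ⨅ ij : {q : Fin n × Fin n // q.1 ≠ q.2}, PsiSum ψ (p ij.val.1) (p ij.val.2) ≤
        offDiagSum (fun i j ↦ PsiSum ψ (p i) (p j)) / (n * (n - 1)) := by
    simpa using ciInf_le_offDiagSum_div (by simpa using hn) fun i j ↦ PsiSum ψ (p i) (p j)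
  obtain ⟨k, hk, hkn, hmax⟩ := exists_maxK_eq ε hn
  obtain ⟨d₀, p₀, hp₀, hp₀V⟩ := hψ.exists_isDP_forall_psiSum_eq h11 hk (n := n) (by omega) hε.le
  rw [← hmax] at hp₀V
  set V := (ψ (Real.exp ε) 1 + ψ 1 (Real.exp ε)) / ((n : ℝ) - 1) * maxK n ε
  have hmin := ciInf_offDiag_eq hp₀V
  have hmin_greatest : IsGreatest {x : ℝ | ∃ (d : ℕ) (p : Fin n → Fin d → ℝ), IsDP ε p ∧
      x = ⨅ ij : {q : Fin n × Fin n // q.1 ≠ q.2}, PsiSum ψ (p ij.val.1) (p ij.val.2)} V :=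
    ⟨⟨d₀, p₀, hp₀, hmin.symm⟩, by
      rintro _ ⟨d, p, hp, rfl⟩
      exact (hmin_le_avg p).trans (hψ.avg_psiSum_le h11 hε hn hp)⟩
  have havg_greatest : IsGreatest {x : ℝ | ∃ (d : ℕ) (p : Fin n → Fin d → ℝ), IsDP ε p ∧
      x = (∑ i, ∑ j, if i ≠ j then PsiSum ψ (p i) (p j) else 0) / ((n : ℝ) * ((n : ℝ) - 1))} V :=
    ⟨⟨d₀, p₀, hp₀, le_antisymm (hmin ▸ hmin_le_avg p₀) (hψ.avg_psiSum_le h11 hε hn hp₀)⟩, by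
      rintro _ ⟨d, p, hp, rfl⟩
      exact hψ.avg_psiSum_le h11 hε hn hp⟩
  exact ⟨by rw [hmin_greatest.csSup_eq, havg_greatest.csSup_eq], hmin_greatest.csSup_eq⟩
end
end
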